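/- In the modal logic interpretation, the axiom 4 holds: there is a morphism ◇◇A → ◇A in Rel_R, given by the multiplication of the event monad, which collapses two delays k and j into a single delay k + j. -/
import Mathlib


open CategoryTheory

/-- An object of `R = Set^(ℕ+1)`. -/
structure RObj : Type 1 where
  inf : Type
  at_ : ℕ → Type
  π : ∀ n, inf → at_ n

/-- The product of two objects of `R`, computed componentwise. -/
def ProdObj (A B : RObj) : RObj where
  inf := A.inf × B.inf
  at_ := fun n => A.at_ n × B.at_ n
  π := fun n p => (A.π n p.1, B.π n p.2)

/-- A subobject of an object `X` of `R`: a family of subsets compatible with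
the restriction maps. -/
@[ext]
structure RSub (X : RObj) : Type where
  sinf : Set X.inf
  sat : ∀ n, Set (X.at_ n)
  compat : ∀ n x, x ∈ sinf → X.π n x ∈ sat n

/-- An internal relation from `A` to `B`: a subobject of `A × B`. -/
abbrev RRel (A B : RObj) : Type := RSub (ProdObj A B)

/-- The identity (diagonal) relation. -/
def rid (A : RObj) : RRel A A where
  sinf := {p | p.1 = p.2}
  sat := fun n => {p | p.1 = p.2}
  compat := fun n x hx => by
    show A.π n x.1 = A.π n x.2
    rw [hx]

/-- Relational composition. -/
def rcomp {A B C : RObj} (r : RRel A B) (s : RRel B C) : RRel A C where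
  sinf := {p | ∃ b, (p.1, b) ∈ r.sinf ∧ (b, p.2) ∈ s.sinf}
  sat := fun n => {p | ∃ b, (p.1, b) ∈ r.sat n ∧ (b, p.2) ∈ s.sat n}
  compat := fun n x hx => by
    obtain ⟨b, h1, h2⟩ := hx
    exact ⟨B.π n b, r.compat n (x.1, b) h1, s.compat n (b, x.2) h2⟩

theorem rid_comp {A B : RObj} (r : RRel A B) : rcomp (rid A) r = r := by
  apply RSub.ext
  · ext p
    constructor
    · rintro ⟨b, h1, h2⟩
      have hb : p.1 = b := h1
      cases hb
      exact h2
    · exact fun h => ⟨p.1, rfl, h⟩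
  · funext n
    ext p
    constructor
    · rintro ⟨b, h1, h2⟩
      have hb : p.1 = b := h1
      cases hb
      exact h2
    · exact fun h => ⟨p.1, rfl, h⟩

theorem rcomp_rid {A B : RObj} (r : RRel A B) : rcomp r (rid B) = r := by
  apply RSub.ext
  · ext p
    constructor
    · rintro ⟨b, h1, h2⟩
      have hb : b = p.2 := h2
      cases hb
      exact h1
    · exact fun h => ⟨p.2, h, rfl⟩
  · funext n
    ext p
    constructor
    · rintro ⟨b, h1, h2⟩
      have hb : b = p.2 := h2
      cases hb
      exact h1
    · exact fun h => ⟨p.2, h, rfl⟩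

theorem rcomp_assoc {A B C D : RObj} (r : RRel A B) (s : RRel B C) (t : RRel C D) :
    rcomp (rcomp r s) t = rcomp r (rcomp s t) := by
  apply RSub.ext
  · ext p
    constructor
    · rintro ⟨c, ⟨b, h1, h2⟩, h3⟩
      exact ⟨b, h1, c, h2, h3⟩
    · rintro ⟨b, h1, c, h2, h3⟩
      exact ⟨c, ⟨b, h1, h2⟩, h3⟩
  · funext n
    ext p
    constructor
    · rintro ⟨c, ⟨b, h1, h2⟩, h3⟩
      exact ⟨b, h1, c, h2, h3⟩
    · rintro ⟨b, h1, c, h2, h3⟩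
      exact ⟨c, ⟨b, h1, h2⟩, h3⟩

/-- The category `Rel_R` of internal relations over `R`: objects are those of
`R`, morphisms `A ⟶ B` are internal relations, i.e. subobjects of `A × B`;
composition is relational composition. -/
instance : Category RObj where
  Hom := RRel
  id := rid
  comp := rcomp
  id_comp := rid_comp
  comp_id := rcomp_rid
  assoc := rcomp_assoc
/-- The component family of the later object. -/
def laterAt (A : RObj) : ℕ → Type
  | 0 => PUnit
  | n + 1 => A.at_ n

/-- The restriction maps of the later object. -/
def laterπ (A : RObj) : ∀ n, A.inf → laterAt A n
  | 0 => fun _ => PUnit.unit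
  | n + 1 => A.π n

/-- The later object `▷A`: `(▷A)_0 = 1`, `(▷A)_{n+1} = A_n`, `(▷A)_∞ = A_∞`. -/
def LaterObj (A : RObj) : RObj :=
  { inf := A.inf, at_ := laterAt A, π := laterπ A }

/-- The iterated later modality `▷^k` on objects. -/
def laterIter : ℕ → RObj → RObj
  | 0, A => A
  | k + 1, A => LaterObj (laterIter k A)

/-- The event object `◇A`: `(◇A)_n = Σ(k:ℕ). (▷^k A)_n`, `(◇A)_∞ = A_∞`. -/
def DiamondObj (A : RObj) : RObj where
  inf := A.inf
  at_ := fun n => Σ k : ℕ, (laterIter k A).at_ n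
  π := fun n a => ⟨0, A.π n a⟩

/-- Collapsing two delays into one, using `▷^j (▷^k A) ≅ ▷^(j+k) A`: an
element of `(▷^j ◇A)_n` determines the set of elements of `(◇A)_n` that it
can collapse to (an element delayed by `j` whose inner delay is `k` collapses
to delay `j + k`; a not-yet-available event, i.e. a stage `n < j`, collapses
to any delay `≥ j`). -/
def addDelay (A : RObj) : ∀ (j n : ℕ),
    (laterIter j (DiamondObj A)).at_ n → Set (Σ k : ℕ, (laterIter k A).at_ n)
  | 0, _, u => {u}
  | j + 1, 0, _ => {p | j + 1 ≤ p.1}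
  | j + 1, n + 1, u =>
      {p | ∃ q ∈ addDelay A j n u, p = ⟨q.1 + 1, q.2⟩}

/-- the axiom 4 holds: there is a morphism `◇◇A → ◇A` in
`Rel_R`, the multiplication of the event monad, which collapses two delays
`k` and `j` into the single delay `k + j`. -/
theorem axiom_four (A : RObj) :
    ∃ r : RRel (DiamondObj (DiamondObj A)) (DiamondObj A),
      r.sinf = {p | p.2 = p.1}
      ∧ ∀ n, r.sat n = {p | p.2 ∈ addDelay A p.1.1 n p.1.2} := by
  refine ⟨⟨{p | p.2 = p.1}, fun n => {p | p.2 ∈ addDelay A p.1.1 n p.1.2},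
    fun n x hx => ?_⟩, rfl, fun n => rfl⟩
  have h : x.2 = x.1 := hx
  show (⟨0, A.π n x.2⟩ : Σ k, (laterIter k A).at_ n) ∈
    addDelay A 0 n (⟨0, ⟨0, A.π n x.1⟩⟩ : Σ k, (laterIter k (DiamondObj A)).at_ n).2
  rw [h]
  rfl
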